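/- Let G = (V,E) be a d-regular graph on n vertices. Assign each vertex v an independent uniform bit X(v), and each edge e an independent bit Z(e) which is 1 with probability ε. Label each edge (u,v) by Y(u,v) = X(u)+X(v)+Z(u,v) mod 2, and form the 2-lift G′ as above using labels Y. Then with probability at least 1 − e^{−εnd/6}, there exists a set V* ⊆ V×{0,1} with |V*| = n whose edge expansion in G′ is at most 2ε. -/

import Mathlib

/-!
Lifting every vertex `v` to the copy `(v, X v)` gives a set `V*` of `n` vertices of the 2-lift.
An edge `uv` of `G` lifts to an edge leaving `V*` exactly when its label `Y(u,v)` differs from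
`X u + X v`, i.e. when the noise bit `Z(uv)` is set, and then both lifted copies leave `V*`.
So the cut of `V*` has `2 · #{e : Z e = 1}` edges, and by the exponential-moment (Chernoff)
bound at most `2ε|E| = εnd` edges are noisy outside an event of probability `e^{-ε|E|/3}`.
-/

open scoped Classical

/-- The 2-lift of a graph `G` determined by an edge labelling `ℓ`: vertices `V × Bool`,
and `(u,a)` is adjacent to `(v,b)` iff `G.Adj u v` and `a xor b = ℓ s(u,v)`. -/
def lift2 {V : Type*} (G : SimpleGraph V) (ℓ : Sym2 V → Bool) :
    SimpleGraph (V × Bool) where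
  Adj p q := G.Adj p.1 q.1 ∧ xor p.2 q.2 = ℓ s(p.1, q.1)
  symm := by
    constructor
    intro p q h
    refine ⟨h.1.symm, ?_⟩
    rw [Bool.xor_comm, Sym2.eq_swap]
    exact h.2
  loopless := by
    constructor
    intro p h
    exact G.loopless.irrefl p.1 h.1

/-- The noisy-parity edge labelling `Y(u,v) = X(u) + X(v) + Z(u,v)` (as a total
function on `Sym2 V`, junk value `false` off the edge set). -/
noncomputable def labelOf {V : Type*} [Fintype V] [DecidableEq V]
    (G : SimpleGraph V) [DecidableRel G.Adj]
    (x : V → Bool) (z : {e // e ∈ G.edgeFinset} → Bool) : Sym2 V → Bool :=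
  fun e => if h : e ∈ G.edgeFinset then
      xor (z ⟨e, h⟩) (Sym2.lift ⟨fun u w => xor (x u) (x w),
        fun u w => Bool.xor_comm (x u) (x w)⟩ e)
    else false

open Finset

section Bernoulli

variable {E : Type*} [Fintype E]

def bernoulliWeight (ε : ℝ) (z : E → Bool) : ℝ := ∏ e, if z e then ε else 1 - ε

lemma bernoulliWeight_nonneg {ε : ℝ} (hε0 : 0 ≤ ε) (hε1 : ε ≤ 1) (z : E → Bool) :
    0 ≤ bernoulliWeight ε z :=
  prod_nonneg fun e _ => by split <;> linarith

variable [DecidableEq E]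

lemma sum_bernoulliWeight_mul_pow (ε t : ℝ) :
    ∑ z : E → Bool, bernoulliWeight ε z * t ^ #{e | z e} = (1 - ε + t * ε) ^ Fintype.card E := by
  have hprod : ∀ z : E → Bool,
      bernoulliWeight ε z * t ^ #{e | z e} = ∏ e, if z e then t * ε else 1 - ε := by
    intro z
    simp only [bernoulliWeight, prod_ite, prod_const, mul_pow]
    ring
  simp only [hprod]
  rw [← Fintype.prod_sum (fun (_ : E) (b : Bool) => if b then t * ε else 1 - ε)]
  simp [add_comm]

lemma sum_bernoulliWeight_mul_indicator_lt_card_le {ε : ℝ} (hε0 : 0 ≤ ε) (hε1 : ε ≤ 1)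
    {s : ℝ} (hs : 0 ≤ s) (a : ℝ) :
    ∑ z : E → Bool, bernoulliWeight ε z * (if a < #{e | z e} then 1 else 0)
      ≤ Real.exp (-(s * a)) * (1 - ε + Real.exp s * ε) ^ Fintype.card E := by
  have hmarkov : ∀ k : ℕ,
      (if a < k then (1 : ℝ) else 0) ≤ Real.exp (-(s * a)) * Real.exp s ^ k := by
    intro k
    split_ifs with hk
    · rw [← Real.exp_nat_mul, ← Real.exp_add]
      exact Real.one_le_exp (by nlinarith)
    · positivity
  calc ∑ z : E → Bool, bernoulliWeight ε z * (if a < #{e | z e} then 1 else 0)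
      ≤ ∑ z : E → Bool, bernoulliWeight ε z * (Real.exp (-(s * a)) * Real.exp s ^ #{e | z e}) :=
        sum_le_sum fun z _ =>
          mul_le_mul_of_nonneg_left (hmarkov _) (bernoulliWeight_nonneg hε0 hε1 z)
    _ = Real.exp (-(s * a)) * (1 - ε + Real.exp s * ε) ^ Fintype.card E := by
        simp only [mul_left_comm _ (Real.exp _), ← mul_sum, sum_bernoulliWeight_mul_pow]

lemma one_sub_exp_le_sum_bernoulliWeight_card_le {ε : ℝ} (hε0 : 0 ≤ ε) (hε1 : ε ≤ 1) :
    1 - Real.exp (-(ε * Fintype.card E) / 3) ≤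
      ∑ z : E → Bool, bernoulliWeight ε z *
        (if (#{e | z e} : ℝ) ≤ 2 * ε * Fintype.card E then 1 else 0) := by
  set M := Fintype.card E
  have htotal : ∑ z : E → Bool, bernoulliWeight ε z = 1 := by
    simpa using sum_bernoulliWeight_mul_pow (E := E) ε 1
  have hcompl : ∑ z : E → Bool, bernoulliWeight ε z *
      (if (#{e | z e} : ℝ) ≤ 2 * ε * M then 1 else 0)
      = 1 - ∑ z : E → Bool, bernoulliWeight ε z * (if 2 * ε * M < #{e | z e} then 1 else 0) := by
    rw [eq_sub_iff_add_eq, ← sum_add_distrib]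
    refine (sum_congr rfl fun z _ => ?_).trans htotal
    split_ifs <;> linarith
  have htail := sum_bernoulliWeight_mul_indicator_lt_card_le (E := E) hε0 hε1
    (Real.log_nonneg one_le_two) (2 * ε * M)
  rw [Real.exp_log two_pos] at htail
  have hmoment : (1 - ε + 2 * ε) ^ M ≤ Real.exp (M * ε) := by
    rw [Real.exp_nat_mul]
    exact pow_le_pow_left₀ (by linarith) (by linarith [Real.add_one_le_exp ε]) M
  -- the constant `1/3` comes from `2 log 2 - 1 > 1/3`
  have hexponent : -(Real.log 2 * (2 * ε * M)) + M * ε ≤ -(ε * M) / 3 := by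
    nlinarith [Real.log_two_gt_d9, mul_nonneg hε0 M.cast_nonneg]
  calc 1 - Real.exp (-(ε * M) / 3)
      ≤ 1 - Real.exp (-(Real.log 2 * (2 * ε * M))) * Real.exp (M * ε) := by
        rw [← Real.exp_add]
        gcongr
    _ ≤ _ := by
        rw [hcompl]
        gcongr
        exact htail.trans (mul_le_mul_of_nonneg_left hmoment (Real.exp_nonneg _))

end Bernoulli

section TwoLift

variable {V : Type*} [Fintype V] (G : SimpleGraph V) [DecidableRel G.Adj]

def noisyGraph (z : {e // e ∈ G.edgeFinset} → Bool) : SimpleGraph V :=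
  SimpleGraph.fromEdgeSet {e | ∃ h : e ∈ G.edgeFinset, z ⟨e, h⟩}

lemma card_edgeFinset_noisyGraph (z : {e // e ∈ G.edgeFinset} → Bool) :
    #(noisyGraph G z).edgeFinset = #{e | z e} := by
  rw [← card_map (Function.Embedding.subtype _)]
  congr 1
  ext e
  rw [SimpleGraph.mem_edgeFinset, noisyGraph, SimpleGraph.edgeSet_fromEdgeSet]
  simp only [mem_map, mem_filter, mem_univ, true_and, Function.Embedding.coe_subtype]
  constructor
  · rintro ⟨⟨h, hz⟩, -⟩
    exact ⟨⟨e, h⟩, hz, rfl⟩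
  · rintro ⟨e, hz, rfl⟩
    exact ⟨⟨e.2, hz⟩, G.not_isDiag_of_mem_edgeSet (G.mem_edgeFinset.1 e.2)⟩

variable [DecidableEq V]

def liftSection (σ : V → Bool) : Finset (V × Bool) := univ.image fun v => (v, σ v)

lemma card_liftSection (σ : V → Bool) : #(liftSection σ) = Fintype.card V :=
  card_image_of_injective _ fun _ _ h => congrArg Prod.fst h

lemma compl_liftSection (σ : V → Bool) :
    (liftSection σ)ᶜ = univ.image fun v => (v, !σ v) := by
  ext ⟨v, b⟩
  cases b <;> cases h : σ v <;> simp [liftSection, h]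

lemma sum_cut_liftSection (ℓ : Sym2 V → Bool) (σ : V → Bool) :
    ∑ p ∈ liftSection σ, ∑ q ∈ (liftSection σ)ᶜ,
        (if (lift2 G ℓ).Adj p q then (1 : ℝ) else 0)
      = #{p : V × V | G.Adj p.1 p.2 ∧ ℓ s(p.1, p.2) ≠ xor (σ p.1) (σ p.2)} := by
  have hinj : ∀ f : V → Bool, Set.InjOn (fun v => (v, f v)) ↑(univ : Finset V) :=
    fun _ _ _ _ _ h => congrArg Prod.fst h
  rw [compl_liftSection, liftSection, sum_image (hinj σ)]
  simp only [sum_image (hinj fun v => !σ v)]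
  rw [← sum_product', ← sum_boole]
  refine sum_congr rfl fun p _ => if_congr ?_ rfl rfl
  simp only [lift2]
  cases σ p.1 <;> cases σ p.2 <;> cases ℓ s(p.1, p.2) <;> simp

lemma labelOf_ne_xor_iff (x : V → Bool) (z : {e // e ∈ G.edgeFinset} → Bool) {u v : V}
    (h : G.Adj u v) :
    labelOf G x z s(u, v) ≠ xor (x u) (x v) ↔ z ⟨s(u, v), G.mem_edgeFinset.2 h⟩ := by
  have he : s(u, v) ∈ G.edgeFinset := G.mem_edgeFinset.2 h
  rw [labelOf, dif_pos he, Sym2.lift_mk]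
  cases z ⟨s(u, v), he⟩ <;> simp

lemma sum_cut_liftSection_labelOf (x : V → Bool) (z : {e // e ∈ G.edgeFinset} → Bool) :
    ∑ p ∈ liftSection x, ∑ q ∈ (liftSection x)ᶜ,
        (if (lift2 G (labelOf G x z)).Adj p q then (1 : ℝ) else 0)
      = 2 * #{e | z e} := by
  rw [sum_cut_liftSection, ← card_edgeFinset_noisyGraph]
  norm_cast
  rw [SimpleGraph.two_mul_card_edgeFinset]
  congr 1
  ext ⟨u, v⟩
  simp only [mem_filter, mem_univ, true_and, noisyGraph, SimpleGraph.fromEdgeSet_adj]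
  constructor
  · rintro ⟨h, hne⟩
    exact ⟨⟨G.mem_edgeFinset.2 h, (labelOf_ne_xor_iff G x z h).1 hne⟩, G.ne_of_adj h⟩
  · rintro ⟨⟨he, hz⟩, -⟩
    have h : G.Adj u v := G.mem_edgeFinset.1 he
    exact ⟨h, (labelOf_ne_xor_iff G x z h).2 hz⟩

end TwoLift

/-- For a `d`-regular graph `G` on `n` vertices with i.i.d. uniform vertex bits `X` and
independent Bernoulli(ε) edge noise `Z`, labelling edges by `Y = X(u)+X(v)+Z(e)`, with
probability at least `1 - e^{-εnd/6}` the 2-lift `G'` contains a set `V*` of exactly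
`n` vertices whose edge expansion is at most `2ε`. -/
theorem stmt16 {V : Type*} [Fintype V] [DecidableEq V]
    (G : SimpleGraph V) [DecidableRel G.Adj] (d : ℕ) (ε : ℝ)
    (hε0 : 0 ≤ ε) (hε1 : ε ≤ 1) (hreg : ∀ v : V, G.degree v = d) :
    (1 : ℝ) - Real.exp (-(ε * Fintype.card V * d) / 6) ≤
      ∑ x : V → Bool, ∑ z : {e // e ∈ G.edgeFinset} → Bool,
        ((1 : ℝ) / 2 ^ Fintype.card V) *
        (∏ e : {e // e ∈ G.edgeFinset}, if z e then ε else 1 - ε) *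
        (if ∃ Vs : Finset (V × Bool), Vs.card = Fintype.card V ∧
            (∑ p ∈ Vs, ∑ q ∈ Vsᶜ,
              if (lift2 G (labelOf G x z)).Adj p q then (1 : ℝ) else 0)
              ≤ 2 * ε * d * Fintype.card V
          then (1 : ℝ) else 0) := by
  have hhandshake : (Fintype.card V : ℝ) * d = 2 * Fintype.card {e // e ∈ G.edgeFinset} := by
    have h := G.sum_degrees_eq_twice_card_edges
    simp only [hreg, sum_const, card_univ, smul_eq_mul] at h
    rw [Fintype.card_coe]
    exact_mod_cast h
  set M := Fintype.card {e // e ∈ G.edgeFinset}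
  calc 1 - Real.exp (-(ε * Fintype.card V * d) / 6) = 1 - Real.exp (-(ε * M) / 3) := by
        rw [mul_assoc, hhandshake]
        ring_nf
    _ ≤ ∑ z, bernoulliWeight ε z * (if (#{e | z e} : ℝ) ≤ 2 * ε * M then 1 else 0) :=
        one_sub_exp_le_sum_bernoulliWeight_card_le hε0 hε1
    _ = ∑ x : V → Bool, ∑ z : {e // e ∈ G.edgeFinset} → Bool,
          (1 / 2 ^ Fintype.card V) * bernoulliWeight ε z *
          (if (#{e | z e} : ℝ) ≤ 2 * ε * M then 1 else 0) := by
        rw [sum_const, card_univ, Fintype.card_fun, Fintype.card_bool, nsmul_eq_mul]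
        simp only [mul_assoc, ← mul_sum]
        push_cast
        field_simp
    _ ≤ _ := by
        refine sum_le_sum fun x _ => sum_le_sum fun z _ => ?_
        refine mul_le_mul_of_nonneg_left ?_
          (mul_nonneg (by positivity) (bernoulliWeight_nonneg hε0 hε1 z))
        split_ifs with hfew hcut
        · exact le_rfl
        · refine absurd ⟨liftSection x, card_liftSection x, ?_⟩ hcut
          rw [sum_cut_liftSection_labelOf]
          nlinarith
        · positivity
        · exact le_rfl
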